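/- arXiv:2107.10551 — 8 statements merged into one kernel-verified Lean document; each statement's English description precedes it below -/
import Mathlib

section
/- For x ∈ F_2^n, define P(x) = |x|/4 ∈ ℝ/ℤ where |x| = Σᵢ|xᵢ|. Then for all h, h' ∈ F_2^n and all x ∈ F_2^n, the second additive derivative Δ_{h'}Δ_h P(x) equals -|h'∘h|/2 mod 1, where ∘ denotes entrywise product; in particular it is independent of x. -/
/-!
Write `|x| ∈ ℤ` for the Hamming weight. Over `F₂` one has `|x + y| = |x| + |y| - 2|x ∘ y|`, so
`Δ_h |x| = |h| - 2|x ∘ h|` and `Δ_{h'} Δ_h |x| = -2|h' ∘ h| + 4|x ∘ h ∘ h' ∘ h|`. Dividing by `4`,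
the term depending on `x` becomes an integer and vanishes in `ℝ/ℤ`.
-/

/-- Additive derivative of a map `P` in direction `h`. -/
def addDeriv {G M : Type*} [Add G] [Sub M] (h : G) (P : G → M) : G → M :=
  fun x => P (x + h) - P x

open Finset

lemma addDeriv_comp {G M N : Type*} [Add G] [AddGroup M] [AddGroup N] (φ : M →+ N)
    (h : G) (f : G → M) : addDeriv h (φ ∘ f) = φ ∘ addDeriv h f := by
  funext x
  simp [addDeriv, map_sub]

lemma ZMod.val_add_two (a b : ZMod 2) :
    ((a + b).val : ℤ) = a.val + b.val - 2 * (a * b).val := by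
  revert a b
  decide

section HammingWeight

variable {ι : Type*} [Fintype ι]

def hammingWeight (x : ι → ZMod 2) : ℤ := ∑ i, ((x i).val : ℤ)

lemma hammingWeight_add (x y : ι → ZMod 2) :
    hammingWeight (x + y) = hammingWeight x + hammingWeight y - 2 * hammingWeight (x * y) := by
  simp only [hammingWeight, Pi.add_apply, Pi.mul_apply, ZMod.val_add_two, sum_sub_distrib,
    sum_add_distrib, mul_sum]

lemma addDeriv_hammingWeight (h x : ι → ZMod 2) :
    addDeriv h hammingWeight x = hammingWeight h - 2 * hammingWeight (x * h) := by
  rw [addDeriv, hammingWeight_add]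
  ring

lemma addDeriv_addDeriv_hammingWeight (h h' x : ι → ZMod 2) :
    addDeriv h' (addDeriv h hammingWeight) x
      = -2 * hammingWeight (h' * h) + 4 * hammingWeight (x * h * (h' * h)) := by
  rw [addDeriv, addDeriv_hammingWeight, addDeriv_hammingWeight, add_mul, hammingWeight_add]
  ring

end HammingWeight

theorem stmt_2 (n : ℕ)
    (P : (Fin n → ZMod 2) → AddCircle (1 : ℝ))
    (hP : ∀ x, P x = ((((∑ i, ((x i).val : ℝ)) / 4 : ℝ)) : AddCircle (1 : ℝ)))
    (h h' x : Fin n → ZMod 2) :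
    addDeriv h' (addDeriv h P) x
      = ((-((∑ i, (((h' i) * (h i)).val : ℝ)) / 2 : ℝ)) : AddCircle (1 : ℝ)) := by
  let quarter : ℤ →+ AddCircle (1 : ℝ) :=
    AddMonoidHom.mk' (fun m => ((m / 4 : ℝ) : AddCircle (1 : ℝ)))
      (fun a b => by push_cast; rw [add_div, AddCircle.coe_add])
  have hP_comp : P = quarter ∘ hammingWeight := by
    funext y
    simp [hP, quarter, hammingWeight]
  rw [hP_comp, addDeriv_comp, addDeriv_comp, Function.comp_apply, addDeriv_addDeriv_hammingWeight,
    map_add]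
  have hx_term : quarter (4 * hammingWeight (x * h * (h' * h))) = 0 := by
    simp [quarter, mul_div_cancel_left₀]
  rw [hx_term, add_zero]
  simp only [quarter, AddMonoidHom.mk'_apply, hammingWeight, Pi.mul_apply]
  push_cast
  congr 1
  ring
end

section
/- The function P : F_2^n → ℝ/ℤ given by P(x) = |x|/8 is a nonclassical polynomial of degree at most 3: for all h₁, h₂, h₃, h₄ ∈ F_2^n, the fourth additive derivative Δ_{h₄}Δ_{h₃}Δ_{h₂}Δ_{h₁}P is identically zero. -/
open Finset

lemma addDeriv_comp_addMonoidHom {G M N : Type*} [Add G] [AddGroup M] [AddGroup N]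
    (f : M →+ N) (h : G) (P : G → M) : addDeriv h (f ∘ P) = f ∘ addDeriv h P := by
  funext x
  simp [addDeriv]

lemma addDeriv_sum_apply_coord {ι M : Type*} [Fintype ι] {G : ι → Type*} [∀ i, Add (G i)]
    [AddCommGroup M] (f : ∀ i, G i → M) (h : ∀ i, G i) :
    addDeriv h (fun x => ∑ i, f i (x i)) = fun x => ∑ i, addDeriv (h i) (f i) (x i) := by
  funext x
  simp [addDeriv, sum_sub_distrib]

lemma addDeriv_four_zmod_two_val (h₁ h₂ h₃ h₄ a : ZMod 2) :
    addDeriv h₄ (addDeriv h₃ (addDeriv h₂ (addDeriv h₁ fun b : ZMod 2 => (b.val : ℤ)))) a =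
      8 * (h₁.val * h₂.val * h₃.val * h₄.val * (2 * a.val - 1)) := by
  revert h₁ h₂ h₃ h₄ a
  decide

lemma eight_dvd_addDeriv_four_sum_val {ι : Type*} [Fintype ι] (h₁ h₂ h₃ h₄ x : ι → ZMod 2) :
    (8 : ℤ) ∣ addDeriv h₄ (addDeriv h₃ (addDeriv h₂ (addDeriv h₁
      fun y : ι → ZMod 2 => ∑ i, ((y i).val : ℤ)))) x := by
  simp only [addDeriv_sum_apply_coord (fun _ b => ((b : ZMod 2).val : ℤ)), addDeriv_sum_apply_coord]
  exact dvd_sum fun i _ => addDeriv_four_zmod_two_val .. ▸ dvd_mul_right 8 _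

theorem stmt_5 (n : ℕ)
    (P : (Fin n → ZMod 2) → AddCircle (1 : ℝ))
    (hP : ∀ x, P x = ((((∑ i, ((x i).val : ℝ)) / 8 : ℝ)) : AddCircle (1 : ℝ)))
    (h₁ h₂ h₃ h₄ x : Fin n → ZMod 2) :
    addDeriv h₄ (addDeriv h₃ (addDeriv h₂ (addDeriv h₁ P))) x = 0 := by
  let φ : ℤ →+ AddCircle (1 : ℝ) := zmultiplesHom _ ((1 / 8 : ℝ) : AddCircle (1 : ℝ))
  have hPφ : P = φ ∘ fun y => ∑ i, ((y i).val : ℤ) := by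
    funext y
    rw [hP, Function.comp_apply, zmultiplesHom_apply, ← AddCircle.coe_zsmul, zsmul_eq_mul]
    push_cast
    ring_nf
  obtain ⟨k, hk⟩ := eight_dvd_addDeriv_four_sum_val h₁ h₂ h₃ h₄ x
  simp only [hPφ, addDeriv_comp_addMonoidHom, Function.comp_apply, hk]
  rw [zmultiplesHom_apply, mul_comm, mul_zsmul, ← AddCircle.coe_zsmul]
  norm_num [AddCircle.coe_period]
end

section
/- Let p be a prime and P : F_p^n → ℝ/ℤ a nonclassical polynomial of degree at most 1 (i.e., all second additive derivatives vanish). Then there exists a constant α ∈ ℝ/ℤ and a classical linear function, i.e. there exist c ∈ F_p^n, such that P(x) = α + |⟨c,x⟩|/p (mod 1) for all x, where ⟨c,x⟩ is the standard inner product in F_p and |·| is the natural lift to {0,...,p-1}. -/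
theorem exists_addMonoidHom_of_addDeriv_addDeriv_eq_zero {G M : Type*} [AddZeroClass G]
    [AddCommGroup M] {P : G → M} (hP : ∀ h₁ h₂ x, addDeriv h₂ (addDeriv h₁ P) x = 0) :
    ∃ φ : G →+ M, ∀ x, P x = P 0 + φ x := by
  have hadd (x y : G) : P (x + y) - P 0 = (P x - P 0) + (P y - P 0) := by
    have := hP y x 0
    simp only [addDeriv, zero_add] at this
    rw [← sub_eq_zero, ← this]
    abel
  exact ⟨AddMonoidHom.mk' (fun x => P x - P 0) hadd, fun x => by simp⟩

namespace ZMod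

variable {N : ℕ} [NeZero N]

theorem exists_toAddCircle_eq_of_nsmul_eq_zero {y : UnitAddCircle} (hy : N • y = 0) :
    ∃ j : ZMod N, toAddCircle j = y := by
  obtain ⟨r, rfl⟩ := QuotientAddGroup.mk_surjective y
  obtain ⟨m, hm⟩ :=
    (AddCircle.coe_eq_zero_iff (1 : ℝ)).mp (hy : ((N • r : ℝ) : UnitAddCircle) = 0)
  refine ⟨m, ?_⟩
  have hm' : (m : ℝ) = N * r := by simpa [nsmul_eq_mul] using hm
  rw [toAddCircle_intCast, hm', mul_div_cancel_left₀ _ (NeZero.ne _)]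

theorem _root_.AddMonoidHom.exists_eq_toAddCircle_dotProduct {ι : Type*} [Fintype ι]
    [DecidableEq ι] (φ : (ι → ZMod N) →+ UnitAddCircle) :
    ∃ c : ι → ZMod N, ∀ x, φ x = toAddCircle (c ⬝ᵥ x) := by
  have htorsion (i : ι) : N • φ (Pi.single i 1) = 0 := by
    rw [← map_nsmul, ← Pi.single_smul, nsmul_eq_mul, natCast_self, zero_mul, Pi.single_zero,
      map_zero]
  choose c hc using fun i => exists_toAddCircle_eq_of_nsmul_eq_zero (htorsion i)
  refine ⟨c, DFunLike.congr_fun (AddMonoidHom.functions_ext _ φ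
    (toAddCircle.comp (AddMonoidHom.mk' (c ⬝ᵥ ·) (dotProduct_add c))) fun i a => ?_)⟩
  obtain ⟨k, rfl⟩ := natCast_zmod_surjective a
  calc φ (Pi.single i k) = φ (k • Pi.single i 1) := by rw [← Pi.single_smul, nsmul_one]
    _ = toAddCircle (k • c i) := by rw [map_nsmul, map_nsmul, hc]
    _ = toAddCircle (c ⬝ᵥ Pi.single i k) := by rw [dotProduct_single, nsmul_eq_mul, mul_comm]

end ZMod

theorem stmt_7 (p : ℕ) (hp : p.Prime) (n : ℕ)
    (P : (Fin n → ZMod p) → AddCircle (1 : ℝ))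
    (hdeg : ∀ h₁ h₂ x, addDeriv h₂ (addDeriv h₁ P) x = 0) :
    ∃ (α : AddCircle (1 : ℝ)) (c : Fin n → ZMod p),
      ∀ x, P x = α + ((((∑ i, c i * x i).val : ℝ) / p : ℝ) : AddCircle (1 : ℝ)) := by
  have : NeZero p := ⟨hp.ne_zero⟩
  obtain ⟨φ, hφ⟩ := exists_addMonoidHom_of_addDeriv_addDeriv_eq_zero hdeg
  obtain ⟨c, hc⟩ := φ.exists_eq_toAddCircle_dotProduct
  exact ⟨P 0, c, fun x => by rw [hφ, hc, ZMod.toAddCircle_apply]; rfl⟩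
end

section
/- For any two functions f, g : F_p^n → ℝ/ℤ, |⟨e(f), e(g)⟩|⁴ ≤ E_{h ∈ F_p^n} |⟨e(Δ_h f), e(Δ_h g)⟩|², where e(t) = exp(2πit), ⟨u,v⟩ = E_x u(x) conj(v(x)) is the averaged inner product, and Δ_h f(x) = f(x+h) - f(x). -/
/-!
With `F = e(f - g)` we have `⟨e(f), e(g)⟩ = E_x F(x)` and `⟨e(Δ_h f), e(Δ_h g)⟩ = E_x F(x + h) conj F(x)`.
Expanding `|E_x F(x)|²` and substituting `y = x + h` shows `|⟨e(f), e(g)⟩|² = E_h ⟨e(Δ_h f), e(Δ_h g)⟩`;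
squaring and applying Cauchy–Schwarz to the average over `h` gives the inequality.
-/

open scoped BigOperators

/-- The exponential `e(t) = exp(2πit)` on `ℝ/ℤ`. -/
noncomputable def ee (t : AddCircle (1 : ℝ)) : ℂ := (AddCircle.toCircle t : ℂ)

/-- Averaged inner product of two complex-valued functions on `F_p^n`. -/
noncomputable def avgInner (p n : ℕ) [NeZero p] (u v : (Fin n → ZMod p) → ℂ) : ℂ :=
  (1 / (p : ℂ) ^ n) * ∑ x : Fin n → ZMod p, u x * (starRingEnd ℂ) (v x)

open scoped ComplexConjugate
open Finset

section FiniteAbelianGroup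

variable {G : Type*} [AddCommGroup G] [Fintype G]

lemma expect_mul_conj_expect (F : G → ℂ) :
    (𝔼 x, F x) * conj (𝔼 x, F x) = 𝔼 h, 𝔼 x, F (x + h) * conj (F x) := by
  rw [map_expect, Fintype.expect_mul_expect, expect_comm]
  conv_rhs => rw [expect_comm]
  refine expect_congr rfl fun x _ => ?_
  exact (Fintype.expect_equiv (Equiv.addLeft x) _ _ fun h => rfl).symm

lemma norm_expect_pow_four_le (F : G → ℂ) :
    ‖𝔼 x, F x‖ ^ 4 ≤ 𝔼 h, ‖𝔼 x, F (x + h) * conj (F x)‖ ^ 2 := by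
  have hsq : ‖𝔼 x, F x‖ ^ 2 = ‖𝔼 h, 𝔼 x, F (x + h) * conj (F x)‖ := by
    rw [← expect_mul_conj_expect, norm_mul, Complex.norm_conj, sq]
  calc ‖𝔼 x, F x‖ ^ 4 = ‖𝔼 h, 𝔼 x, F (x + h) * conj (F x)‖ ^ 2 := by
        rw [← hsq, ← pow_mul]
    _ ≤ (𝔼 h, ‖𝔼 x, F (x + h) * conj (F x)‖) ^ 2 := by
        gcongr
        exact RCLike.norm_expect_le (K := ℂ)
    _ ≤ 𝔼 h, ‖𝔼 x, F (x + h) * conj (F x)‖ ^ 2 := by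
        simpa using expect_mul_sq_le_sq_mul_sq univ
          (fun h => ‖𝔼 x, F (x + h) * conj (F x)‖) (fun _ => (1 : ℝ))

end FiniteAbelianGroup

lemma addDeriv_sub {G M : Type*} [Add G] [AddCommGroup M] (h : G) (f g : G → M) :
    addDeriv h f - addDeriv h g = addDeriv h (f - g) := by
  ext x
  simp only [addDeriv, Pi.sub_apply]
  abel

lemma ee_sub (a b : AddCircle (1 : ℝ)) : ee (a - b) = ee a * conj (ee b) := by
  rw [ee, ee, ee, sub_eq_add_neg, AddCircle.toCircle_add, AddCircle.toCircle_neg, Circle.coe_mul,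
    Circle.coe_inv_eq_conj]

lemma ee_addDeriv {G : Type*} [Add G] (h : G) (φ : G → AddCircle (1 : ℝ)) (x : G) :
    ee (addDeriv h φ x) = ee (φ (x + h)) * conj (ee (φ x)) :=
  ee_sub _ _

lemma one_div_pow_mul_sum_eq_expect {K : Type*} [Semifield K] [CharZero K] (p n : ℕ)
    [NeZero p] (a : (Fin n → ZMod p) → K) :
    1 / (p : K) ^ n * ∑ x, a x = 𝔼 x, a x := by
  rw [Fintype.expect_eq_sum_div_card, Fintype.card_pi, prod_const, card_univ, ZMod.card,
    Fintype.card_fin, Nat.cast_pow, one_div_mul_eq_div]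

lemma avgInner_ee_eq_expect (p n : ℕ) [NeZero p] (f g : (Fin n → ZMod p) → AddCircle (1 : ℝ)) :
    avgInner p n (fun x => ee (f x)) (fun x => ee (g x)) = 𝔼 x, ee ((f - g) x) := by
  simp only [avgInner, one_div_pow_mul_sum_eq_expect, Pi.sub_apply, ee_sub]

theorem stmt_8_general (p : ℕ) [NeZero p] (n : ℕ)
    (f g : (Fin n → ZMod p) → AddCircle (1 : ℝ)) :
    ‖avgInner p n (fun x => ee (f x)) (fun x => ee (g x))‖ ^ 4
      ≤ (1 / (p : ℝ) ^ n) * ∑ h : Fin n → ZMod p,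
          ‖avgInner p n (fun x => ee (addDeriv h f x))
            (fun x => ee (addDeriv h g x))‖ ^ 2 := by
  simp only [one_div_pow_mul_sum_eq_expect, avgInner_ee_eq_expect]
  simp only [addDeriv_sub, ee_addDeriv]
  exact norm_expect_pow_four_le fun x => ee ((f - g) x)

theorem stmt_8 (p : ℕ) [NeZero p] (hp : p.Prime) (n : ℕ)
    (f g : (Fin n → ZMod p) → AddCircle (1 : ℝ)) :
    ‖avgInner p n (fun x => ee (f x)) (fun x => ee (g x))‖ ^ 4
      ≤ (1 / (p : ℝ) ^ n) * ∑ h : Fin n → ZMod p,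
          ‖avgInner p n (fun x => ee (addDeriv h f x))
            (fun x => ee (addDeriv h g x))‖ ^ 2 :=
  stmt_8_general p n f g
end

section
/- Let p be a prime, n ≥ 1, and let H₁, ..., H_r ⊆ F_p^n be affine subspaces with r ≤ n/2. Then there exist an affine subspace U ⊆ F_p^n of dimension at least n - 2r and a subset S ⊆ {1,...,r} such that for all x ∈ U: x ∈ H_i if i ∈ S and x ∉ H_i if i ∉ S. -/
/-!
Treat the subspaces one at a time, shrinking a nonempty affine subspace `U` by codimension at
most one per step. If `U` neither lies in `H` nor misses it, pick `a ∈ H` and `b ∈ U \ H` and a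
functional `f` vanishing on the direction of `H` with `f (b - a) ≠ 0`; then the section
`{x ∈ U | f x = f b}` misses `H`. After `r` steps the dimension is still at least `n - r`.
-/

open Module

theorem Submodule.finrank_le_finrank_inf_ker_add_one {K V : Type*} [Field K] [AddCommGroup V]
    [Module K V] (P : Submodule K V) [FiniteDimensional K P] (f : V →ₗ[K] K) :
    finrank K P ≤ finrank K ↥(P ⊓ LinearMap.ker f) + 1 := by
  have hker : finrank K (LinearMap.ker (f.domRestrict P)) = finrank K ↥(P ⊓ LinearMap.ker f) := by
    rw [LinearMap.ker_domRestrict, ← Submodule.map_comap_subtype, Submodule.finrank_map_subtype_eq]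
  have hrange : finrank K (LinearMap.range (f.domRestrict P)) ≤ 1 := by
    simpa using (LinearMap.range (f.domRestrict P)).finrank_le
  have := LinearMap.finrank_range_add_finrank_ker (f.domRestrict P)
  omega

namespace AffineSubspace

variable {K V P : Type*} [Field K] [AddCommGroup V] [Module K V] [AddTorsor V P]

theorem exists_le_finrank_add_one_forall_notMem [FiniteDimensional K V]
    {U H : AffineSubspace K P} {a b : P} (ha : a ∈ H) (hbU : b ∈ U) (hbH : b ∉ H) :
    ∃ U' ≤ U, b ∈ U' ∧ finrank K U.direction ≤ finrank K U'.direction + 1 ∧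
      ∀ x ∈ U', x ∉ H := by
  have hba : b -ᵥ a ∉ H.direction := fun h => hbH (by simpa using vadd_mem_of_mem_direction h ha)
  obtain ⟨f, hfba, hfH⟩ := Submodule.exists_dual_map_eq_bot_of_notMem hba inferInstance
  refine ⟨mk' b (U.direction ⊓ LinearMap.ker (f : V →ₗ[K] K)), ?_, self_mem_mk' _ _, ?_, ?_⟩
  · exact ((mk'_le_mk'_iff b).mpr inf_le_left).trans (mk'_eq hbU).le
  · rw [direction_mk']
    exact U.direction.finrank_le_finrank_inf_ker_add_one f
  · intro x hxU' hxH
    have hxb : f (x -ᵥ b) = 0 := (mem_mk'.mp hxU').2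
    have hxa : f (x -ᵥ a) = 0 :=
      LinearMap.le_ker_iff_map.mpr hfH (vsub_mem_direction hxH ha)
    apply hfba
    rw [← vsub_sub_vsub_cancel_left b a x, map_sub, hxb, hxa, sub_zero]

theorem exists_le_finrank_add_one_forall_mem_or_forall_notMem [FiniteDimensional K V]
    {U : AffineSubspace K P} (hU : (U : Set P).Nonempty) (H : AffineSubspace K P) :
    ∃ U' ≤ U, (U' : Set P).Nonempty ∧ finrank K U.direction ≤ finrank K U'.direction + 1 ∧
      ((∀ x ∈ U', x ∈ H) ∨ ∀ x ∈ U', x ∉ H) := by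
  by_cases hsub : ∀ x ∈ U, x ∈ H
  · exact ⟨U, le_rfl, hU, Nat.le_succ _, .inl hsub⟩
  by_cases hdisj : ∀ x ∈ U, x ∉ H
  · exact ⟨U, le_rfl, hU, Nat.le_succ _, .inr hdisj⟩
  push Not at hsub hdisj
  obtain ⟨b, hbU, hbH⟩ := hsub
  obtain ⟨a, -, haH⟩ := hdisj
  obtain ⟨U', hle, hbU', hrank, hU'⟩ := exists_le_finrank_add_one_forall_notMem haH hbU hbH
  exact ⟨U', hle, ⟨b, hbU'⟩, hrank, .inr hU'⟩

theorem exists_finrank_add_card_forall_mem_or_forall_notMem [FiniteDimensional K V]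
    [Nonempty P] {ι : Type*} (H : ι → AffineSubspace K P) (s : Finset ι) :
    ∃ U : AffineSubspace K P, (U : Set P).Nonempty ∧
      finrank K V ≤ finrank K U.direction + s.card ∧
      ∀ i ∈ s, (∀ x ∈ U, x ∈ H i) ∨ ∀ x ∈ U, x ∉ H i := by
  classical
  induction s using Finset.induction_on with
  | empty => exact ⟨⊤, Set.univ_nonempty, by rw [direction_top, finrank_top]; omega, by simp⟩
  | insert j s hj ih =>
    obtain ⟨U, hU, hrank, hdec⟩ := ih
    obtain ⟨U', hle, hU', hrank', hdec'⟩ :=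
      exists_le_finrank_add_one_forall_mem_or_forall_notMem hU (H j)
    refine ⟨U', hU', by rw [Finset.card_insert_of_notMem hj]; omega, ?_⟩
    rintro i hi
    rcases Finset.mem_insert.mp hi with rfl | hi
    · exact hdec'
    · exact (hdec i hi).imp (fun h x hx => h x (hle hx)) (fun h x hx => h x (hle hx))

end AffineSubspace

theorem stmt_12_general (p : ℕ) (hp : p.Prime) (n r : ℕ)
    (H : Fin r → AffineSubspace (ZMod p) (Fin n → ZMod p)) :
    ∃ (U : AffineSubspace (ZMod p) (Fin n → ZMod p)) (S : Finset (Fin r)),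
      (U : Set (Fin n → ZMod p)).Nonempty ∧
      n - 2 * r ≤ Module.finrank (ZMod p) U.direction ∧
      ∀ x ∈ U, ∀ i, (x ∈ H i ↔ i ∈ S) := by
  classical
  have := Fact.mk hp
  obtain ⟨U, hU, hrank, hdec⟩ :=
    AffineSubspace.exists_finrank_add_card_forall_mem_or_forall_notMem H Finset.univ
  simp only [Module.finrank_fin_fun, Finset.card_univ, Fintype.card_fin] at hrank
  refine ⟨U, ({i | ∀ x ∈ U, x ∈ H i} : Finset (Fin r)), hU, by omega, fun x hx i => ?_⟩
  rw [Finset.mem_filter_univ]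
  rcases hdec i (Finset.mem_univ i) with hin | hout
  · exact ⟨fun _ => hin, fun h => h x hx⟩
  · exact ⟨fun h => absurd h (hout x hx), fun h => h x hx⟩

theorem stmt_12 (p : ℕ) (hp : p.Prime) (n r : ℕ) (hn : 1 ≤ n) (hr : 2 * r ≤ n)
    (H : Fin r → AffineSubspace (ZMod p) (Fin n → ZMod p))
    (hHne : ∀ i, (H i : Set (Fin n → ZMod p)).Nonempty) :
    ∃ (U : AffineSubspace (ZMod p) (Fin n → ZMod p)) (S : Finset (Fin r)),
      (U : Set (Fin n → ZMod p)).Nonempty ∧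
      n - 2 * r ≤ Module.finrank (ZMod p) U.direction ∧
      ∀ x ∈ U, ∀ i, (x ∈ H i ↔ i ∈ S) :=
  stmt_12_general p hp n r H
end

section
/- Let d ≥ 2 and P : F_p^n → ℝ/ℤ a nonclassical polynomial with r = rank_d(P) finite. Then there exists a nonclassical polynomial Q of degree at most d-1 such that |⟨e(P), e(Q)⟩| ≥ p^{-(1+⌈(d-1)/(p-1)⌉)r}. -/
open scoped BigOperators

/-- Iterated additive derivative along a list of directions. -/
def itDeriv {G M : Type*} [Add G] [Sub M] : List G → (G → M) → (G → M)
  | [], P => P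
  | h :: t, P => addDeriv h (itDeriv t P)

/-- `P` is a (nonclassical) polynomial of degree at most `d`: all `(d+1)`-fold
additive derivatives vanish. -/
def DegLE {G M : Type*} [Add G] [SubtractionMonoid M] (d : ℕ) (P : G → M) : Prop :=
  ∀ l : List G, l.length = d + 1 → ∀ x, itDeriv l P x = 0

/-- The set of sizes of decompositions `P = Γ(Q₁,…,Q_r)` with `deg Qᵢ ≤ d - 1`;
its least element is `rank_d(P)`. -/
def rankSet (p n d : ℕ) (P : (Fin n → ZMod p) → AddCircle (1 : ℝ)) : Set ℕ :=
  {r | ∃ (Q : Fin r → (Fin n → ZMod p) → AddCircle (1 : ℝ))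
        (_ : ∀ i, DegLE (d - 1) (Q i))
        (Γ : (Fin r → AddCircle (1 : ℝ)) → AddCircle (1 : ℝ)),
      ∀ x, Γ (fun i => Q i x) = P x}

/-!
Write `P = Γ(Q₁, …, Q_r)` with `deg Qᵢ ≤ m := d - 1`. On a group of exponent `p` the
Gregory–Newton formula gives `∑ₖ C(p,k) Δₕᵏ Q = Q` (since `p • h = 0`); together with
`Δₕ^(m+1) Q = 0` and `p ∣ C(p,k)` for `0 < k < p`, this shows that `Qᵢ(x) - Qᵢ(0)` is killed by
`N := p ^ ⌈m / (p - 1)⌉`. So `e(P) = f ∘ q` with `|f| = 1`, where `q x ∈ (ℤ/N)^r` encodes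
`(Qᵢ(x) - Qᵢ(0))ᵢ`. Expanding `f` in the `N^r` characters of `(ℤ/N)^r`, whose coefficients have
modulus at most `1`, gives `1 = ⟨e(P), e(P)⟩ ≤ ∑_ψ |⟨e(P), ψ ∘ q⟩|`, and every `ψ ∘ q` is
`e(∑ tᵢ(Qᵢ - Qᵢ(0)))`, the phase of a polynomial of degree at most `m`. Pigeonhole finishes.
-/

section Polynomial

variable {G M : Type*} [AddCommGroup G] [AddCommGroup M]

open fwdDiff_aux in
lemma itDeriv_eq_prod (l : List G) :
    itDeriv l = ⇑((l.map (fwdDiffₗ G M)).prod) := by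
  induction l with
  | nil => rfl
  | cons h t ih =>
    funext P
    simp only [itDeriv, ih, List.map_cons, List.prod_cons, Module.End.mul_apply]
    rfl

lemma itDeriv_replicate (h : G) (k : ℕ) (P : G → M) :
    itDeriv (List.replicate k h) P = (fwdDiff h)^[k] P := by
  induction k with
  | zero => rfl
  | succ k ih => rw [Function.iterate_succ_apply', ← ih]; rfl

variable (G M) in
def polyAddSubgroup (m : ℕ) : AddSubgroup (G → M) where
  carrier := {P | DegLE m P}
  zero_mem' := by intro l _ x; simp [itDeriv_eq_prod]
  add_mem' := by
    intro P R hP hR l hl x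
    have hPx := hP l hl x
    have hRx := hR l hl x
    rw [itDeriv_eq_prod] at hPx hRx ⊢
    rw [map_add, Pi.add_apply, hPx, hRx, add_zero]
  neg_mem' := by
    intro P hP l hl x
    have hPx := hP l hl x
    rw [itDeriv_eq_prod] at hPx ⊢
    rw [map_neg, Pi.neg_apply, hPx, neg_zero]

@[simp] lemma mem_polyAddSubgroup {m : ℕ} {P : G → M} :
    P ∈ polyAddSubgroup G M m ↔ DegLE m P :=
  Iff.rfl

lemma itDeriv_const_cons (h : G) (t : List G) (c : M) :
    itDeriv (h :: t) (fun _ => c) = 0 := by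
  induction t generalizing h with
  | nil => exact fwdDiff_const h c
  | cons a t ih => exact (congrArg (fwdDiff h) (ih a)).trans (fwdDiff_const h 0)

lemma degLE_const (m : ℕ) (c : M) : DegLE m (fun _ : G => c) := by
  rintro (_ | ⟨h, t⟩) hl x
  · simp at hl
  · rw [itDeriv_const_cons]; rfl

lemma DegLE.fwdDiff_iterate_eq_zero {m k : ℕ} {P : G → M} (hP : DegLE m P) (h : G)
    (hk : m < k) : (fwdDiff h)^[k] P = 0 := by
  obtain ⟨j, rfl⟩ : ∃ j, k = j + (m + 1) := ⟨k - (m + 1), by omega⟩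
  have hzero : (fwdDiff h)^[m + 1] P = 0 := by
    funext x; rw [← itDeriv_replicate]; exact hP _ (List.length_replicate ..) x
  rw [Function.iterate_add_apply, hzero]
  exact Function.iterate_fixed (fwdDiff_const h 0) j

end Polynomial

theorem prime_pow_smul_eq_zero_of_sum_choose {A : Type*} [AddCommGroup A] {p m : ℕ}
    {u : ℕ → A} (hp : p.Prime)
    (hvan : ∀ k, m < k → u k = 0)
    (hrec : ∀ j, ∑ k ∈ Finset.range (p + 1), p.choose k • u (j + k) = u j)
    (a b : ℕ) (hb : 0 < b) (hab : m < a * (p - 1) + b) : p ^ a • u b = 0 := by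
  rcases lt_or_ge m b with hmb | hbm
  · rw [hvan b hmb, smul_zero]
  match a, hab with
  | 0, hab => omega
  | a + 1, hab =>
    have hp2 := hp.two_le
    -- At `b - 1` the recurrence is `p • u b + ∑_{1<k<p} C(p,k) • u (b+k-1) + u (b+p-1) = 0`.
    -- Times `p ^ a`, the middle terms vanish as `p ∣ C(p,k)` (recursion on a larger `b`), and
    -- the last one with one power of `p` less (recursion on `a`).
    have hshift : ∑ k ∈ Finset.range (p - 1), p.choose (k + 1) • u (b + k)
        + u (b + (p - 1)) = 0 := by
      obtain ⟨c, rfl⟩ : ∃ c, b = c + 1 := ⟨b - 1, by omega⟩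
      have h := hrec c
      rw [Finset.sum_range_succ, show p = p - 1 + 1 by omega, Finset.sum_range_succ'] at h
      simp only [Nat.choose_zero_right, Nat.choose_self, add_zero, one_smul] at h
      simp only [← add_assoc, Nat.add_right_comm c _ 1,
        Nat.sub_add_cancel (by omega : 1 ≤ p)] at h ⊢
      rw [add_right_comm, add_eq_right] at h
      rwa [show c + 1 + (p - 1) = c + p by omega]
    have hlast : p ^ a • u (b + (p - 1)) = 0 :=
      prime_pow_smul_eq_zero_of_sum_choose hp hvan hrec a (b + (p - 1)) (by omega)
        (by rw [add_one_mul] at hab; omega)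
    have hmiddle : ∀ k ∈ Finset.range (p - 1), k ≠ 0 →
        p ^ a • p.choose (k + 1) • u (b + k) = 0 := by
      intro k hk hk0
      rw [Finset.mem_range] at hk
      obtain ⟨e, he⟩ := hp.dvd_choose_self (Nat.succ_ne_zero k) (by omega)
      have := prime_pow_smul_eq_zero_of_sum_choose hp hvan hrec (a + 1) (b + k) (by omega)
        (by omega)
      rw [he, smul_smul, ← mul_assoc, ← pow_succ, mul_comm, mul_smul, this, smul_zero]
    have key := congrArg (p ^ a • ·) hshift
    simp only [smul_add, Finset.smul_sum, smul_zero] at key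
    rw [Finset.sum_eq_single 0 hmiddle (fun h => absurd (Finset.mem_range.2 (by omega)) h),
      hlast, add_zero] at key
    simpa [pow_succ, mul_smul] using key
termination_by (a, m + 1 - b)
decreasing_by
  · exact Prod.Lex.left _ _ (Nat.lt_succ_self a)
  · exact Prod.Lex.right _ (by omega)

theorem DegLE.prime_pow_smul_sub_eq_zero {G M : Type*} [AddCommGroup G] [AddCommGroup M]
    {p m a : ℕ} {Q : G → M} (hQ : DegLE m Q) (hp : p.Prime) (hG : ∀ g : G, p • g = 0)
    (ha : m ≤ a * (p - 1)) (x : G) : p ^ a • (Q x - Q 0) = 0 := by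
  have hrec (j : ℕ) : ∑ k ∈ Finset.range (p + 1), p.choose k • (fwdDiff x)^[j + k] Q =
      (fwdDiff x)^[j] Q := by
    funext y
    rw [Finset.sum_apply]
    conv_rhs => rw [← add_zero y, ← hG x, shift_eq_sum_fwdDiff_iter x ((fwdDiff x)^[j] Q)]
    simp only [Pi.smul_apply, add_comm j, Function.iterate_add_apply]
  have h := prime_pow_smul_eq_zero_of_sum_choose hp
    (fun k hk => hQ.fwdDiff_iterate_eq_zero x hk) hrec a 1 one_pos (by omega)
  simpa [fwdDiff] using congrFun h 0

open ComplexConjugate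

section Fourier

variable {A : Type*} [AddCommGroup A] [Fintype A]

noncomputable def charCoeff (f : A → ℂ) (ψ : AddChar A ℂ) : ℂ :=
  (Fintype.card A : ℂ)⁻¹ * ∑ a, f a * conj (ψ a)

lemma sum_charCoeff_mul_apply (f : A → ℂ) (a : A) :
    ∑ ψ : AddChar A ℂ, charCoeff f ψ * ψ a = f a := by
  classical
  have hA : (Fintype.card A : ℂ) ≠ 0 := Nat.cast_ne_zero.mpr Fintype.card_ne_zero
  have horth (b : A) : ∑ ψ : AddChar A ℂ, conj (ψ b) * ψ a =
      if b = a then (Fintype.card A : ℂ) else 0 := by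
    simp_rw [← AddChar.map_neg_eq_conj, ← AddChar.map_add_eq_mul, AddChar.sum_apply_eq_ite,
      neg_add_eq_zero]
  simp_rw [charCoeff, mul_assoc, ← Finset.mul_sum, Finset.sum_mul, mul_assoc]
  rw [Finset.sum_comm]
  simp_rw [← Finset.mul_sum, horth, mul_ite, mul_zero, Finset.sum_ite_eq', Finset.mem_univ,
    if_true]
  field_simp

lemma norm_charCoeff_le_one {f : A → ℂ} (hf : ∀ a, ‖f a‖ ≤ 1) (ψ : AddChar A ℂ) :
    ‖charCoeff f ψ‖ ≤ 1 := by
  have hA : (0 : ℝ) < Fintype.card A := Nat.cast_pos.mpr Fintype.card_pos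
  rw [charCoeff, norm_mul, norm_inv, Complex.norm_natCast, inv_mul_le_one₀ hA]
  calc ‖∑ a, f a * conj (ψ a)‖ ≤ ∑ a, ‖f a * conj (ψ a)‖ := norm_sum_le _ _
    _ ≤ ∑ _a : A, (1 : ℝ) := Finset.sum_le_sum fun a _ => by
        rw [norm_mul, RCLike.norm_conj, AddChar.norm_apply, mul_one]; exact hf a
    _ = Fintype.card A := by simp

theorem exists_addChar_card_div_le_norm_sum {X : Type*} [Fintype X] {f : A → ℂ}
    (hf : ∀ a, ‖f a‖ = 1) (q : X → A) :
    ∃ ψ : AddChar A ℂ,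
      (Fintype.card X : ℝ) / Fintype.card A ≤ ‖∑ x, f (q x) * conj (ψ (q x))‖ := by
  set S : AddChar A ℂ → ℂ := fun ψ => ∑ x, f (q x) * conj (ψ (q x))
  have hexpand : (Fintype.card X : ℂ) = ∑ ψ, conj (charCoeff f ψ) * S ψ := by
    calc (Fintype.card X : ℂ) = ∑ x, f (q x) * conj (f (q x)) := by
          simp [Complex.mul_conj, Complex.normSq_eq_norm_sq, hf]
      _ = ∑ x, f (q x) * conj (∑ ψ, charCoeff f ψ * ψ (q x)) := by
          simp_rw [sum_charCoeff_mul_apply]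
      _ = ∑ ψ, conj (charCoeff f ψ) * S ψ := by
          simp_rw [S, map_sum, map_mul, Finset.mul_sum]
          rw [Finset.sum_comm]
          exact Finset.sum_congr rfl fun _ _ => Finset.sum_congr rfl fun _ _ => by ring
  have hle :
      ∑ _ψ : AddChar A ℂ, (Fintype.card X : ℝ) / Fintype.card A ≤ ∑ ψ, ‖S ψ‖ := by
    have hA : (Fintype.card A : ℝ) ≠ 0 := Nat.cast_ne_zero.mpr Fintype.card_ne_zero
    rw [Finset.sum_const, Finset.card_univ, AddChar.card_eq, nsmul_eq_mul,
      mul_div_cancel₀ _ hA]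
    calc (Fintype.card X : ℝ) = ‖∑ ψ, conj (charCoeff f ψ) * S ψ‖ := by
          rw [← hexpand, Complex.norm_natCast]
      _ ≤ ∑ ψ, ‖conj (charCoeff f ψ) * S ψ‖ := norm_sum_le _ _
      _ ≤ ∑ ψ, ‖S ψ‖ := Finset.sum_le_sum fun ψ _ => by
          rw [norm_mul, RCLike.norm_conj]
          exact mul_le_of_le_one_left (norm_nonneg _)
            (norm_charCoeff_le_one (fun a => (hf a).le) ψ)
  obtain ⟨ψ, -, hψ⟩ := Finset.exists_le_of_sum_le Finset.univ_nonempty hle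
  exact ⟨ψ, hψ⟩

end Fourier

lemma AddChar.map_sum_eq_prod {ι A M : Type*} [AddCommMonoid A] [CommMonoid M]
    (ψ : AddChar A M) (s : Finset ι) (f : ι → A) :
    ψ (∑ i ∈ s, f i) = ∏ i ∈ s, ψ (f i) := by
  classical
  induction s using Finset.induction_on with
  | empty => simp
  | insert a s ha ih => rw [Finset.sum_insert ha, Finset.prod_insert ha, map_add_eq_mul, ih]

theorem AddChar.exists_eq_stdAddChar_sum_mul {N r : ℕ} [NeZero N]
    (ψ : AddChar (Fin r → ZMod N) ℂ) :
    ∃ t : Fin r → ZMod N, ∀ v, ψ v = ZMod.stdAddChar (∑ i, t i * v i) := by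
  choose t ht using fun i =>
    (AddChar.zmodAddEquiv (n := N)).surjective
      (ψ.compAddMonoidHom (AddMonoidHom.single (fun _ : Fin r => ZMod N) i))
  refine ⟨t, fun v => ?_⟩
  conv_lhs => rw [← Finset.univ_sum_single v]
  rw [AddChar.map_sum_eq_prod, AddChar.map_sum_eq_prod]
  refine Finset.prod_congr rfl fun i _ => ?_
  have := DFunLike.congr_fun (ht i) (v i)
  simp only [AddChar.zmodAddEquiv_apply, AddChar.compAddMonoidHom_apply,
    AddMonoidHom.single_apply] at this
  rw [← this]
  rfl

lemma ZMod.exists_toAddCircle_eq {N : ℕ} [NeZero N] {u : AddCircle (1 : ℝ)}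
    (hu : N • u = 0) : ∃ j : ZMod N, ZMod.toAddCircle j = u := by
  obtain ⟨x, rfl⟩ := QuotientAddGroup.mk_surjective u
  rw [← AddCircle.coe_nsmul, AddCircle.coe_eq_zero_iff] at hu
  obtain ⟨k, hk⟩ := hu
  refine ⟨k, ?_⟩
  rw [ZMod.toAddCircle_intCast]
  congr 1
  rw [zsmul_eq_mul, mul_one, nsmul_eq_mul] at hk
  rw [div_eq_iff (Nat.cast_ne_zero.mpr (NeZero.ne N)), hk, mul_comm]

lemma ZMod.toAddCircle_mul {N : ℕ} [NeZero N] (t j : ZMod N) :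
    ZMod.toAddCircle (t * j) = t.val • ZMod.toAddCircle j := by
  rw [← map_nsmul, nsmul_eq_mul, ZMod.natCast_zmod_val]

lemma ee_toAddCircle {N : ℕ} [NeZero N] (j : ZMod N) :
    ee (ZMod.toAddCircle j) = ZMod.stdAddChar j := rfl

lemma norm_ee (t : AddCircle (1 : ℝ)) : ‖ee t‖ = 1 := Circle.norm_coe _

theorem exists_degLE_card_div_le_norm_sum {G : Type*} [AddCommGroup G] [Fintype G]
    {r m N : ℕ} [NeZero N] {P : G → AddCircle (1 : ℝ)}
    {Q : Fin r → G → AddCircle (1 : ℝ)} {Γ : (Fin r → AddCircle (1 : ℝ)) → AddCircle (1 : ℝ)}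
    (hΓ : ∀ x, Γ (fun i => Q i x) = P x) (hQ : ∀ i, DegLE m (Q i))
    (htors : ∀ i x, N • (Q i x - Q i 0) = 0) :
    ∃ R : G → AddCircle (1 : ℝ), DegLE m R ∧
      (Fintype.card G : ℝ) / N ^ r ≤ ‖∑ x, ee (P x) * conj (ee (R x))‖ := by
  choose q hq using fun x i => ZMod.exists_toAddCircle_eq (htors i x)
  set f : (Fin r → ZMod N) → ℂ := fun s => ee (Γ fun i => Q i 0 + ZMod.toAddCircle (s i))
  have hfq (x : G) : f (q x) = ee (P x) := by simp [f, hq, hΓ]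
  obtain ⟨ψ, hψ⟩ := exists_addChar_card_div_le_norm_sum (f := f) (fun _ => norm_ee _) q
  obtain ⟨t, ht⟩ := ψ.exists_eq_stdAddChar_sum_mul
  set R : G → AddCircle (1 : ℝ) := ∑ i, (t i).val • (Q i - fun _ => Q i 0)
  have hR : R ∈ polyAddSubgroup G _ m := AddSubgroup.sum_mem _ fun i _ =>
    AddSubgroup.nsmul_mem _ (sub_mem (hQ i) (degLE_const m _)) _
  have hψR (x : G) : ψ (q x) = ee (R x) := by
    simp [ht, R, ← ee_toAddCircle, ZMod.toAddCircle_mul, hq]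
  refine ⟨R, mem_polyAddSubgroup.1 hR, ?_⟩
  simpa [hfq, hψR, Fintype.card_fun, ZMod.card] using hψ

lemma le_natCeil_div_mul {p : ℕ} (hp : 2 ≤ p) (m : ℕ) :
    m ≤ ⌈(m : ℚ) / ((p : ℚ) - 1)⌉₊ * (p - 1) := by
  have hp1 : (0 : ℚ) < p - 1 := by
    have : (2 : ℚ) ≤ p := by exact_mod_cast hp
    linarith
  have h := (div_le_iff₀ hp1).1 (Nat.le_ceil ((m : ℚ) / ((p : ℚ) - 1)))
  have hcast : (m : ℚ) ≤ ((⌈(m : ℚ) / ((p : ℚ) - 1)⌉₊ * (p - 1) : ℕ) : ℚ) := by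
    rwa [Nat.cast_mul, Nat.cast_sub (by omega), Nat.cast_one]
  exact_mod_cast hcast

lemma natCeil_div_le_one_add_ceil {p : ℕ} (hp : 2 ≤ p) (d : ℕ) :
    (⌈((d - 1 : ℕ) : ℚ) / ((p : ℚ) - 1)⌉₊ : ℤ) ≤
      1 + ⌈((d : ℚ) - 1) / ((p : ℚ) - 1)⌉ := by
  have hp1 : (1 : ℚ) ≤ p - 1 := by
    have : (2 : ℚ) ≤ p := by exact_mod_cast hp
    linarith
  have hd : ((d - 1 : ℕ) : ℚ) ≤ d := by exact_mod_cast Nat.sub_le d 1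
  have hceil := Nat.ceil_lt_add_one (by positivity : 0 ≤ ((d - 1 : ℕ) : ℚ) / ((p : ℚ) - 1))
  have hdiv :
      ((d - 1 : ℕ) : ℚ) / ((p : ℚ) - 1) ≤ ((d : ℚ) - 1) / ((p : ℚ) - 1) + 1 := by
    rw [div_add_one (by linarith), div_le_div_iff_of_pos_right (by linarith)]
    linarith
  rw [← sub_le_iff_le_add', Int.le_ceil_iff]
  push_cast
  linarith

theorem stmt_15_general (p : ℕ) [NeZero p] (hp : p.Prime) (n d r : ℕ)
    (P : (Fin n → ZMod p) → AddCircle (1 : ℝ))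
    (hrank : IsLeast (rankSet p n d P) r) :
    ∃ Q : (Fin n → ZMod p) → AddCircle (1 : ℝ),
      DegLE (d - 1) Q ∧
      (p : ℝ) ^ (-((1 + ⌈((d : ℚ) - 1) / ((p : ℚ) - 1)⌉) * r))
        ≤ ‖avgInner p n (fun x => ee (P x)) (fun x => ee (Q x))‖ := by
  obtain ⟨⟨Q, hQ, Γ, hΓ⟩, -⟩ := hrank
  set c := ⌈((d - 1 : ℕ) : ℚ) / ((p : ℚ) - 1)⌉₊
  have hexp (g : Fin n → ZMod p) : p • g = 0 := by funext i; simp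
  have : NeZero (p ^ c) := ⟨pow_ne_zero _ hp.ne_zero⟩
  obtain ⟨R, hR, hcorr⟩ := exists_degLE_card_div_le_norm_sum hΓ hQ fun i x =>
    (hQ i).prime_pow_smul_sub_eq_zero hp hexp (le_natCeil_div_mul hp.two_le (d - 1)) x
  refine ⟨R, hR, ?_⟩
  have hp1 : (1 : ℝ) ≤ p := by exact_mod_cast hp.one_le
  calc (p : ℝ) ^ (-((1 + ⌈((d : ℚ) - 1) / ((p : ℚ) - 1)⌉) * r))
      ≤ (p : ℝ) ^ (-((c * r : ℕ) : ℤ)) := by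
        refine zpow_le_zpow_right₀ hp1 ?_
        have := natCeil_div_le_one_add_ceil hp.two_le d
        push_cast
        nlinarith
    _ = ((p : ℝ) ^ n)⁻¹ * (Fintype.card (Fin n → ZMod p) / ((p ^ c : ℕ) : ℝ) ^ r) := by
        rw [zpow_neg, zpow_natCast, Fintype.card_fun, ZMod.card, Fintype.card_fin]
        push_cast
        rw [pow_mul]
        field_simp
    _ ≤ ‖avgInner p n (fun x => ee (P x)) (fun x => ee (R x))‖ := by
        rw [avgInner, norm_mul, norm_div, norm_one, norm_pow, Complex.norm_natCast, one_div]
        exact mul_le_mul_of_nonneg_left hcorr (by positivity)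

theorem stmt_15 (p : ℕ) [NeZero p] (hp : p.Prime) (n d r : ℕ) (hd : 2 ≤ d)
    (P : (Fin n → ZMod p) → AddCircle (1 : ℝ))
    (hrank : IsLeast (rankSet p n d P) r) :
    ∃ Q : (Fin n → ZMod p) → AddCircle (1 : ℝ),
      DegLE (d - 1) Q ∧
      (p : ℝ) ^ (-((1 + ⌈((d : ℚ) - 1) / ((p : ℚ) - 1)⌉) * r))
        ≤ ‖avgInner p n (fun x => ee (P x)) (fun x => ee (Q x))‖ :=
  stmt_15_general p hp n d r P hrank
end

section
/- Let P : F_p^n → ℝ/ℤ be a nonclassical polynomial of degree d ≥ 2 with rank r = rank_d(P). Let U ⊆ F_p^n be an affine subspace of codimension k and P' the restriction of P to U (viewed in local coordinates via an affine parametrization of U). If r > pk + 1, then P' has degree exactly d and rank_d(P') ≥ r - pk. -/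
/-!
Write `U = A(W)` and pick vectors `e₁, …, e_k` spanning a complement of its direction, so that
every `x` is `y(x) + ∑ⱼ tⱼ(x) eⱼ` with `y(x) ∈ U` and affine coordinates `tⱼ(x) ∈ 𝔽_p`.
Adding the `eⱼ` one at a time and telescoping, `P(x) - P(y(x))` is a sum over `j` of
`tⱼ(x).val` values of the derivative `Δ_{eⱼ} P`, which has degree `≤ d - 1`. For each `j`
this sum is a function of the `p - 1` shifted derivatives and of the degree-one label
`tⱼ(x).val / p ∈ ℝ/ℤ`, which determines how many of them to add. Hence
`rank_d(P) ≤ rank_d(P') + p k`; applied to a decomposition of `P'` into itself when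
`deg P' ≤ d - 1`, this contradicts `r > p k + 1`.
-/

open scoped BigOperators

open Finset Module

variable {G G' M : Type*}

section Derivatives

lemma itDeriv_append [Add G] [Sub M] (l₁ l₂ : List G) (P : G → M) :
    itDeriv (l₁ ++ l₂) P = itDeriv l₁ (itDeriv l₂ P) := by
  induction l₁ with
  | nil => rfl
  | cons h t ih => exact congrArg (addDeriv h) ih

lemma itDeriv_zero [Add G] [SubtractionMonoid M] (l : List G) :
    itDeriv l (0 : G → M) = 0 := by
  induction l with
  | nil => rfl
  | cons h t ih => funext x; simp [itDeriv, ih, addDeriv]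

lemma DegLE.mono [Add G] [SubtractionMonoid M] {d e : ℕ} {P : G → M}
    (hP : DegLE d P) (hde : d ≤ e) : DegLE e P := by
  intro l hl x
  rw [← l.take_append_drop (e - d), itDeriv_append,
    show itDeriv (l.drop (e - d)) P = 0 from
      funext (hP _ (by rw [List.length_drop, hl]; omega)),
    itDeriv_zero]
  rfl

lemma DegLE.addDeriv [Add G] [SubtractionMonoid M] {d : ℕ} {P : G → M}
    (hP : DegLE (d + 1) P) (h : G) : DegLE d (addDeriv h P) := by
  intro l hl x
  have := hP (l ++ [h]) (by simp [hl]) x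
  rwa [itDeriv_append] at this

lemma itDeriv_comp_of_map_add [Add G] [Add G'] [Sub M] {T S : G' → G}
    (hT : ∀ x h, T (x + h) = T x + S h) (P : G → M) (l : List G') :
    itDeriv l (fun x => P (T x)) = fun x => itDeriv (l.map S) P (T x) := by
  induction l with
  | nil => rfl
  | cons h t ih =>
    funext x
    change addDeriv h (itDeriv t _) x = addDeriv (S h) (itDeriv (t.map S) P) (T x)
    simp [ih, addDeriv, hT]

lemma DegLE.comp_of_map_add [Add G] [Add G'] [SubtractionMonoid M] {d : ℕ} {P : G → M}
    (hP : DegLE d P) {T S : G' → G} (hT : ∀ x h, T (x + h) = T x + S h) :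
    DegLE d (fun x => P (T x)) := by
  intro l hl x
  rw [itDeriv_comp_of_map_add hT]
  exact hP _ (by simp [hl]) _

lemma AddMonoidHom.degLE_one [AddZeroClass G] [AddCommGroup M] (f : G →+ M) : DegLE 1 f := by
  rintro (_ | ⟨h₁, _ | ⟨h₂, _ | _⟩⟩) hl x <;> simp at hl
  simp [itDeriv, addDeriv, map_add]

lemma sum_range_addDeriv [AddMonoid G] [AddCommGroup M] (P : G → M) (y e : G) (t : ℕ) :
    ∑ i ∈ range t, addDeriv e P (y + i • e) = P (y + t • e) - P y := by
  simpa [addDeriv, succ_nsmul, add_assoc] using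
    Finset.sum_range_sub (fun i => P (y + i • e)) t

end Derivatives

section Rank

/-- `rank_d(P) ≤ r`; for `P` on `𝔽_p^n` this is membership in `rankSet`. -/
def RankLE [Add G] [SubtractionMonoid M] (d r : ℕ) (P : G → M) : Prop :=
  ∃ (Q : Fin r → G → M) (_ : ∀ i, DegLE (d - 1) (Q i)) (Γ : (Fin r → M) → M),
    ∀ x, Γ (fun i => Q i x) = P x

variable [Add G] [SubtractionMonoid M] {d r r₁ r₂ : ℕ}

lemma DegLE.rankLE_one {P : G → M} (hP : DegLE (d - 1) P) : RankLE d 1 P :=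
  ⟨fun _ => P, fun _ => hP, fun v => v 0, fun _ => rfl⟩

lemma RankLE.add {P₁ P₂ : G → M} (h₁ : RankLE d r₁ P₁) (h₂ : RankLE d r₂ P₂) :
    RankLE d (r₁ + r₂) (P₁ + P₂) := by
  obtain ⟨Q₁, hQ₁, Γ₁, hΓ₁⟩ := h₁
  obtain ⟨Q₂, hQ₂, Γ₂, hΓ₂⟩ := h₂
  refine ⟨Fin.append Q₁ Q₂, Fin.addCases (by simpa using hQ₁) (by simpa using hQ₂),
    fun v => Γ₁ (fun i => v (Fin.castAdd r₂ i)) + Γ₂ (fun i => v (Fin.natAdd r₁ i)),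
    fun x => ?_⟩
  simp [hΓ₁, hΓ₂]

lemma RankLE.comp_of_map_add [Add G'] {P : G → M} (hP : RankLE d r P) {T S : G' → G}
    (hT : ∀ x h, T (x + h) = T x + S h) : RankLE d r (fun x => P (T x)) := by
  obtain ⟨Q, hQ, Γ, hΓ⟩ := hP
  exact ⟨fun i x => Q i (T x), fun i => (hQ i).comp_of_map_add hT, Γ, fun x => hΓ (T x)⟩

end Rank

/-- The sum is a function of its `p - 1` possible terms and of the label
`x ↦ (t x).val / p ∈ ℝ/ℤ`, which has degree one and from which `(t x).val` can be read off. -/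
lemma rankLE_sum_range_val {p d : ℕ} [NeZero p] [AddZeroClass G] (hd : 2 ≤ d)
    (t : G →+ ZMod p) (F : ℕ → G → UnitAddCircle) (hF : ∀ i, DegLE (d - 1) (F i)) :
    RankLE d p (fun x => ∑ i ∈ range (t x).val, F i x) := by
  have hlabel : DegLE (d - 1) (ZMod.toAddCircle.comp t) :=
    (ZMod.toAddCircle.comp t).degLE_one.mono (by omega)
  have hdecode := Function.leftInverse_invFun (ZMod.toAddCircle_injective p)
  have h : RankLE d (p - 1 + 1) (fun x => ∑ i ∈ range (t x).val, F i x) := by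
    refine ⟨Fin.cons (ZMod.toAddCircle.comp t) (fun i => F i),
      Fin.cases hlabel (fun i => hF i),
      fun v => ∑ i : Fin (p - 1),
        if (i : ℕ) < (Function.invFun ZMod.toAddCircle (v 0) : ZMod p).val then v i.succ else 0,
      fun x => ?_⟩
    have hrange : (range (p - 1)).filter (· < (t x).val) = range (t x).val := by
      ext i
      simp only [mem_filter, mem_range]
      have := ZMod.val_lt (t x)
      omega
    simp only [Fin.cons_zero, Fin.cons_succ, AddMonoidHom.coe_comp, Function.comp_apply,
      hdecode (t x)]
    rw [Fin.sum_univ_eq_sum_range (fun i => if i < (t x).val then F i x else 0), ← sum_filter,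
      hrange]
  rwa [Nat.sub_add_cancel NeZero.one_le] at h

section Restriction

variable {p d r : ℕ} {V : Type*} [AddCommGroup V] [Module (ZMod p) V]

/-- Telescoping along `e` writes the change of `P` as a sum of `(μ u).val` values of
`Δ_e P`, which has degree `≤ d - 1`. -/
lemma RankLE.add_smulRight [NeZero p] {P : V → UnitAddCircle} (hP : DegLE d P) (hd : 2 ≤ d)
    {c : V} {π : V →ₗ[ZMod p] V} (h : RankLE d r (fun u => P (c + π u)))
    (μ : V →ₗ[ZMod p] ZMod p) (e : V) :
    RankLE d (r + p) (fun u => P (c + (π + μ.smulRight e) u)) := by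
  have hsplit : (fun u => P (c + (π + μ.smulRight e) u)) =
      (fun u => P (c + π u)) +
        fun u => ∑ i ∈ range (μ u).val, addDeriv e P (c + π u + i • e) := by
    funext u
    rw [Pi.add_apply, sum_range_addDeriv, LinearMap.add_apply, LinearMap.smulRight_apply,
      ← Nat.cast_smul_eq_nsmul (ZMod p), ZMod.natCast_zmod_val, add_assoc, add_sub_cancel]
  have hΔ : DegLE (d - 1) (addDeriv e P) := (show d = d - 1 + 1 by omega) ▸ hP |>.addDeriv e
  rw [hsplit]
  refine h.add (rankLE_sum_range_val hd μ.toAddMonoidHom _ fun i => ?_)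
  exact hΔ.comp_of_map_add (S := π) fun u v => by rw [map_add]; abel

lemma RankLE.add_sum_smulRight [NeZero p] {ι : Type*} {P : V → UnitAddCircle} (hP : DegLE d P)
    (hd : 2 ≤ d) {c : V} {π : V →ₗ[ZMod p] V} (h : RankLE d r (fun u => P (c + π u)))
    (μ : ι → V →ₗ[ZMod p] ZMod p) (e : ι → V) (s : Finset ι) :
    RankLE d (r + p * #s) (fun u => P (c + (π + ∑ j ∈ s, (μ j).smulRight (e j)) u)) := by
  classical
  induction s using Finset.induction_on with
  | empty => simpa using h
  | insert a s ha ih =>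
    rw [sum_insert ha, card_insert_of_notMem ha, mul_add_one, ← add_assoc, add_left_comm,
      add_comm ((μ a).smulRight (e a))]
    exact ih.add_smulRight hP hd (μ a) (e a)

lemma exists_linearMap_add_sum_smul_eq {K W : Type*} [Field K] [Module K V]
    [FiniteDimensional K V] [AddCommGroup W] [Module K W] [FiniteDimensional K W] (L : W →ₗ[K] V)
    (hL : Function.Injective L) {k : ℕ} (hk : finrank K W + k = finrank K V) :
    ∃ (ℓ : V →ₗ[K] W) (e : Fin k → V) (μ : Fin k → V →ₗ[K] K),
      ∀ v, L (ℓ v) + ∑ j, μ j v • e j = v := by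
  obtain ⟨C, hC⟩ := (LinearMap.range L).exists_isCompl
  have hCk : finrank K C = k := by
    have := Submodule.finrank_add_eq_of_isCompl hC
    rw [LinearMap.finrank_range_of_inj hL] at this
    omega
  let b := finBasisOfFinrankEq K C hCk
  refine ⟨L.linearProjOfIsCompl C hL hC, fun j => b j,
    fun j => b.coord j ∘ₗ C.projectionOnto _ hC.symm, fun v => ?_⟩
  have hC_sum : ∑ j, b.coord j (C.projectionOnto _ hC.symm v) • (b j : V) =
      C.projection _ hC.symm v := by
    rw [← Submodule.coe_projectionOnto_apply]
    conv_rhs => rw [← b.sum_repr (C.projectionOnto _ hC.symm v)]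
    simp only [Submodule.coe_sum, Submodule.coe_smul, Basis.coord_apply]
  simp only [LinearMap.coe_comp, Function.comp_apply, hC_sum, LinearMap.linearProjOfIsCompl,
    LinearEquiv.coe_coe, LinearEquiv.ofInjective_symm_apply, Submodule.coe_projectionOnto_apply]
  exact Submodule.projection_add_projection_eq_self hC v

theorem RankLE.of_comp_affineMap [Fact p.Prime] [FiniteDimensional (ZMod p) V] {W : Type*}
    [AddCommGroup W] [Module (ZMod p) W] [FiniteDimensional (ZMod p) W]
    {P : V → UnitAddCircle} (hP : DegLE d P) (hd : 2 ≤ d) (A : W →ᵃ[ZMod p] V)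
    (hA : Function.Injective A) {k : ℕ} (hk : finrank (ZMod p) W + k = finrank (ZMod p) V)
    (h : RankLE d r (fun w => P (A w))) : RankLE d (r + p * k) P := by
  obtain ⟨ℓ, e, μ, hdecomp⟩ :=
    exists_linearMap_add_sum_smul_eq A.linear (A.linear_injective_iff.mpr hA) hk
  have hA0 (w : W) : A w = A 0 + A.linear w := by
    simpa [add_comm] using congrFun A.decomp w
  have hU : RankLE d r (fun u => P (A 0 + (A.linear ∘ₗ ℓ) u)) := by
    simp only [LinearMap.comp_apply, ← hA0]
    exact h.comp_of_map_add (map_add ℓ)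
  have hall : RankLE d (r + p * k) (fun u => P (A 0 + u)) := by
    convert hU.add_sum_smulRight hP hd μ e univ using 4 with u
    · simp
    · simp [LinearMap.sum_apply, hdecomp]
  simpa using hall.comp_of_map_add (T := fun x => x - A 0) (S := id) fun x h => by
    simp only [id]; abel

end Restriction

theorem stmt_16_general (p : ℕ) (hp : p.Prime) (n d k r : ℕ) (hd : 2 ≤ d) (hk : k ≤ n)
    (P : (Fin n → ZMod p) → AddCircle (1 : ℝ))
    (hdegLE : DegLE d P)
    (hrank : IsLeast (rankSet p n d P) r)
    -- `A` is an affine parametrization of an affine subspace `U` of codimension `k`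
    (A : (Fin (n - k) → ZMod p) →ᵃ[ZMod p] (Fin n → ZMod p))
    (hA : Function.Injective A)
    (P' : (Fin (n - k) → ZMod p) → AddCircle (1 : ℝ))
    (hP' : ∀ y, P' y = P (A y))
    (hr : p * k + 1 < r) :
    (DegLE d P' ∧ ¬ DegLE (d - 1) P') ∧
      ∀ r' ∈ rankSet p (n - k) d P', r - p * k ≤ r' := by
  have : Fact p.Prime := ⟨hp⟩
  obtain rfl : P' = fun y => P (A y) := funext hP'
  have hcodim :
      finrank (ZMod p) (Fin (n - k) → ZMod p) + k = finrank (ZMod p) (Fin n → ZMod p) := by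
    simp only [finrank_fin_fun]
    omega
  have hbound (r' : ℕ) (h' : RankLE d r' fun y => P (A y)) : r ≤ r' + p * k :=
    hrank.2 (h'.of_comp_affineMap hdegLE hd A hA hcodim)
  refine ⟨⟨hdegLE.comp_of_map_add (S := A.linear) fun x h => ?_, fun hlow => ?_⟩,
    fun r' hr' => ?_⟩
  · rw [A.decomp]
    simp only [Pi.add_apply, map_add]
    abel
  · have := hbound 1 hlow.rankLE_one
    omega
  · have := hbound r' hr'
    omega

theorem stmt_16 (p : ℕ) (hp : p.Prime) (n d k r : ℕ) (hd : 2 ≤ d) (hk : k ≤ n)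
    (P : (Fin n → ZMod p) → AddCircle (1 : ℝ))
    (hdegLE : DegLE d P) (hdegGT : ¬ DegLE (d - 1) P)
    (hrank : IsLeast (rankSet p n d P) r)
    -- `A` is an affine parametrization of an affine subspace `U` of codimension `k`
    (A : (Fin (n - k) → ZMod p) →ᵃ[ZMod p] (Fin n → ZMod p))
    (hA : Function.Injective A)
    (P' : (Fin (n - k) → ZMod p) → AddCircle (1 : ℝ))
    (hP' : ∀ y, P' y = P (A y))
    (hr : p * k + 1 < r) :
    (DegLE d P' ∧ ¬ DegLE (d - 1) P') ∧
      ∀ r' ∈ rankSet p (n - k) d P', r - p * k ≤ r' :=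
  stmt_16_general p hp n d k r hd hk P hdegLE hrank A hA P' hP' hr
end

section
/- Let d ≥ 3 be an integer and suppose Q₁,...,Q_r : F_2^n → F_2 are classical polynomials of degree at most d-1 with Q_i(0) = 0 for all i, and suppose there is a function Γ : F_2^r → ℝ/ℤ such that Γ(Q_1(x),...,Q_r(x)) = NOR(x) for all x, where NOR(x) = 1/2 if x = 0 and NOR(x) = 0 otherwise. Then r ≥ n/(d-1). -/
/-- The NOR function: `1/2` at the zero vector, `0` elsewhere. -/
noncomputable def NOR (n : ℕ) (x : Fin n → ZMod 2) : AddCircle (1 : ℝ) :=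
  if x = 0 then (((1 : ℝ) / 2 : ℝ) : AddCircle (1 : ℝ)) else 0

/-
By Chevalley–Warning the common zero set of `Q` has even size when `r (d - 1) < n`; it contains
`0`, hence also some `x ≠ 0`. Then `Q(x) = Q(0)`, so `Γ` would have to take both values
`NOR x = 0` and `NOR 0 = 1/2` at the same point.
-/

open MvPolynomial

theorem MvPolynomial.exists_ne_zero_forall_eval_eq_zero {K σ ι : Type*} [Field K] [Fintype K]
    [DecidableEq K] [Fintype σ] [DecidableEq σ] [Fintype ι] {f : ι → MvPolynomial σ K}
    (hdeg : ∑ i, (f i).totalDegree < Fintype.card σ) (h0 : ∀ i, eval 0 (f i) = 0) :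
    ∃ x ≠ 0, ∀ i, eval x (f i) = 0 := by
  have hdvd := char_dvd_card_solutions_of_fintype_sum_lt (ringChar K) hdeg
  have hcard : 1 < Fintype.card { x : σ → K // ∀ i, eval x (f i) = 0 } := by
    have hpos : 0 < Fintype.card { x : σ → K // ∀ i, eval x (f i) = 0 } :=
      Fintype.card_pos_iff.mpr ⟨⟨0, h0⟩⟩
    have hne : Fintype.card { x : σ → K // ∀ i, eval x (f i) = 0 } ≠ 1 := fun h =>
      CharP.ringChar_ne_one (Nat.dvd_one.mp (h ▸ hdvd))
    omega
  obtain ⟨x, hx⟩ := Fintype.exists_ne_of_one_lt_card hcard ⟨0, h0⟩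
  exact ⟨x, fun h => hx (Subtype.ext h), x.2⟩

theorem AddCircle.coe_one_half_ne_zero : (((1 : ℝ) / 2 : ℝ) : AddCircle (1 : ℝ)) ≠ 0 := by
  rw [Ne, AddCircle.coe_eq_zero_iff_of_mem_Ico ⟨by norm_num, by norm_num⟩]
  norm_num

theorem stmt_17_general (n d r : ℕ)
    (Q : Fin r → MvPolynomial (Fin n) (ZMod 2))
    (hdeg : ∀ i, (Q i).totalDegree ≤ d - 1)
    (hQ0 : ∀ i, MvPolynomial.eval (0 : Fin n → ZMod 2) (Q i) = 0)
    (Γ : (Fin r → ZMod 2) → AddCircle (1 : ℝ))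
    (hΓ : ∀ x, Γ (fun i => MvPolynomial.eval x (Q i)) = NOR n x) :
    n ≤ r * (d - 1) := by
  by_contra! hlt
  have hsum : ∑ i, (Q i).totalDegree < Fintype.card (Fin n) := calc
    ∑ i, (Q i).totalDegree ≤ ∑ _i : Fin r, (d - 1) := Finset.sum_le_sum fun i _ => hdeg i
    _ = r * (d - 1) := by simp
    _ < Fintype.card (Fin n) := by simpa using hlt
  obtain ⟨x, hx, hxQ⟩ := exists_ne_zero_forall_eval_eq_zero hsum hQ0
  have hsame : (fun i => eval x (Q i)) = fun i => eval 0 (Q i) := by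
    funext i
    rw [hxQ i, hQ0 i]
  have hNOR : NOR n x = NOR n 0 := (hΓ x).symm.trans ((congrArg Γ hsame).trans (hΓ 0))
  rw [NOR, NOR, if_neg hx, if_pos rfl] at hNOR
  exact AddCircle.coe_one_half_ne_zero hNOR.symm

theorem stmt_17 (n d r : ℕ) (hd : 3 ≤ d)
    (Q : Fin r → MvPolynomial (Fin n) (ZMod 2))
    (hdeg : ∀ i, (Q i).totalDegree ≤ d - 1)
    (hQ0 : ∀ i, MvPolynomial.eval (0 : Fin n → ZMod 2) (Q i) = 0)
    (Γ : (Fin r → ZMod 2) → AddCircle (1 : ℝ))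
    (hΓ : ∀ x, Γ (fun i => MvPolynomial.eval x (Q i)) = NOR n x) :
    n ≤ r * (d - 1) :=
  stmt_17_general n d r Q hdeg hQ0 Γ hΓ
end
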